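/- In the fibring of the conjunction fragments of 3-valued Łukasiewicz logic Ł₃ and 3-valued Gödel logic G₃ via the pair (λ₂, μ₂) — where λ₂ swaps 0 and 1/2 and fixes 1, and μ₂ = λ₂⁻¹ — the connectives &_Ł and &_G are identified: for all (&_Ł,&_G)-associated formulas φ₁, φ₂ and every assignment ā over the six-element fibred support, φ₁(ā) is designated iff φ₂(ā) is designated; this holds even though λ₂ is not a homomorphism between the conjunction fragments. -/

import Mathlib

set_option autoImplicit false

namespace Fibring

/-- Propositional formulas over a signature `C` with arity function `ar`. -/
inductive Fm (C : Type) (ar : C → ℕ) : Type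
  | var : ℕ → Fm C ar
  | app : (c : C) → (Fin (ar c) → Fm C ar) → Fm C ar

/-- Homomorphic extension of a valuation `v` to all formulas, relative to an
interpretation `I` of the connectives. -/
def eval {C A : Type} {ar : C → ℕ}
    (I : (c : C) → (Fin (ar c) → A) → A) (v : ℕ → A) : Fm C ar → A
  | .var n => v n
  | .app c args => I c fun i => eval I v (args i)

/-- Matrix consequence relation. -/
def Mdl {C A : Type} {ar : C → ℕ}
    (I : (c : C) → (Fin (ar c) → A) → A) (D : Set A)
    (Γ : Set (Fm C ar)) (φ : Fm C ar) : Prop :=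
  ∀ v : ℕ → A, (∀ ψ ∈ Γ, eval I v ψ ∈ D) → eval I v φ ∈ D

/-- Substitution. -/
def subst {C : Type} {ar : C → ℕ} (σ : ℕ → Fm C ar) : Fm C ar → Fm C ar
  | .var n => σ n
  | .app c args => .app c fun i => subst σ (args i)

variable {C₁ C₂ A₁ A₂ : Type} {ar₁ : C₁ → ℕ} {ar₂ : C₂ → ℕ}

/-- The coercion `∗_μ : A₁ ⊎ A₂ → A₁`. -/
def starMu (mu : A₂ → A₁) : A₁ ⊕ A₂ → A₁ := Sum.elim id mu

/-- The coercion `∗_λ : A₁ ⊎ A₂ → A₂`. -/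
def starLa (lam : A₁ → A₂) : A₁ ⊕ A₂ → A₂ := Sum.elim lam id

/-- Interpretation of the fibred matrix `M_(λ,μ)`. -/
def fibInterp (I₁ : (c : C₁) → (Fin (ar₁ c) → A₁) → A₁)
    (I₂ : (c : C₂) → (Fin (ar₂ c) → A₂) → A₂)
    (lam : A₁ → A₂) (mu : A₂ → A₁) :
    (c : C₁ ⊕ C₂) → (Fin (Sum.elim ar₁ ar₂ c) → A₁ ⊕ A₂) → A₁ ⊕ A₂
  | .inl c, args => Sum.inl (I₁ c fun i => starMu mu (args i))
  | .inr c, args => Sum.inr (I₂ c fun i => starLa lam (args i))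

/-- Designated values of the fibred matrix: `D₁ ⊎ D₂`. -/
def Dfib (D₁ : Set A₁) (D₂ : Set A₂) : Set (A₁ ⊕ A₂) :=
  Sum.inl '' D₁ ∪ Sum.inr '' D₂

/-- Admissible fibring pairs: `λ` and `μ` preserve and reflect designatedness. -/
def Admissible (D₁ : Set A₁) (D₂ : Set A₂) (lam : A₁ → A₂) (mu : A₂ → A₁) : Prop :=
  (∀ x, lam x ∈ D₂ ↔ x ∈ D₁) ∧ (∀ y, mu y ∈ D₁ ↔ y ∈ D₂)

/-- Recursive extension of a simple fibred valuation to the fibred language. -/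
def sfvExt (I₁ : (c : C₁) → (Fin (ar₁ c) → A₁) → A₁)
    (I₂ : (c : C₂) → (Fin (ar₂ c) → A₂) → A₂)
    (lam : A₁ → A₂) (mu : A₂ → A₁) (v : ℕ → A₁ ⊕ A₂) :
    Fm (C₁ ⊕ C₂) (Sum.elim ar₁ ar₂) → A₁ ⊕ A₂
  | .var n => v n
  | .app (.inl c) args =>
      Sum.inl (I₁ c fun i => starMu mu (sfvExt I₁ I₂ lam mu v (args i)))
  | .app (.inr c) args =>
      Sum.inr (I₂ c fun i => starLa lam (sfvExt I₁ I₂ lam mu v (args i)))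

/-- Inclusion of `L(C₁)` into the fibred language `L(C₁ ⊎ C₂)`. -/
def inj₁ (ar₂ : C₂ → ℕ) : Fm C₁ ar₁ → Fm (C₁ ⊕ C₂) (Sum.elim ar₁ ar₂)
  | .var n => .var n
  | .app c args => .app (Sum.inl c) fun i => inj₁ ar₂ (args i)

/-- `Repl c₁ c₂ h φ ψ`: `ψ` results from `φ` by replacing exactly one occurrence
of `c₁` by `c₂`. -/
inductive Repl {C : Type} {ar : C → ℕ} (c₁ c₂ : C) (h : ar c₁ = ar c₂) :
    Fm C ar → Fm C ar → Prop
  | top (args : Fin (ar c₁) → Fm C ar) :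
      Repl c₁ c₂ h (.app c₁ args) (.app c₂ fun i => args (Fin.cast h.symm i))
  | congr (c : C) (args args' : Fin (ar c) → Fm C ar) (j : Fin (ar c))
      (hj : Repl c₁ c₂ h (args j) (args' j))
      (hother : ∀ i, i ≠ j → args i = args' i) :
      Repl c₁ c₂ h (.app c args) (.app c args')

/-- `(c₁,c₂)`-associated formulas: a finite chain of single replacements of
`c₁` by `c₂` or vice versa (including equality). -/
def Assoc {C : Type} {ar : C → ℕ} (c₁ c₂ : C) (h : ar c₁ = ar c₂)
    (φ₁ φ₂ : Fm C ar) : Prop :=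
  Relation.EqvGen (Repl c₁ c₂ h) φ₁ φ₂


/-! Conjunction fragments of three-valued Łukasiewicz and Gödel logics. -/

/-- A three-element set of truth-values `0 < 1/2 < 1`. -/
inductive Three : Type | z | h | o
deriving DecidableEq

/-- Łukasiewicz strong conjunction `max(0, x + y − 1)` on `{0, 1/2, 1}`. -/
def andL : Three → Three → Three
  | .o, x => x | x, .o => x | _, _ => .z

/-- Gödel conjunction `min(x, y)` on `{0, 1/2, 1}`. -/
def andG : Three → Three → Three
  | .z, _ => .z | _, .z => .z
  | .h, _ => .h | _, .h => .h
  | .o, .o => .o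

/-- The map `λ₂` swapping `0` and `1/2` and fixing `1` (its own inverse `μ₂`). -/
def lam2 : Three → Three
  | .z => .h | .h => .z | .o => .o

/-- Interpretation of the Łukasiewicz conjunction fragment. -/
def IL : (c : Unit) → (Fin ((fun _ : Unit => 2) c) → Three) → Three :=
  fun _ a => andL (a 0) (a 1)

/-- Interpretation of the Gödel conjunction fragment. -/
def IG : (c : Unit) → (Fin ((fun _ : Unit => 2) c) → Three) → Three :=
  fun _ a => andG (a 0) (a 1)

/-! Both conjunctions take the designated value `1` exactly on `(1, 1)`, and the coercions
`λ₂`, `μ₂` preserve and reflect designatedness. So in the fibred matrix the value of a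
formula is designated iff the values of its immediate subformulas are, whichever
conjunction is on top, and replacing one conjunction by the other never changes
designatedness. Truth values themselves are not preserved: `λ₂ (½ &_Ł ½) = ½` but
`λ₂ ½ &_G λ₂ ½ = 0`. -/

def Conjunctive {C A : Type} {ar : C → ℕ} (I : (c : C) → (Fin (ar c) → A) → A)
    (D : Set A) : Prop :=
  ∀ c a, I c a ∈ D ↔ ∀ i, a i ∈ D

section Fibred

variable {D₁ : Set A₁} {D₂ : Set A₂} {lam : A₁ → A₂} {mu : A₂ → A₁}

@[simp]
lemma inl_mem_Dfib_iff {x : A₁} :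
    (Sum.inl x : A₁ ⊕ A₂) ∈ Dfib D₁ D₂ ↔ x ∈ D₁ := by
  simp [Dfib]

@[simp]
lemma inr_mem_Dfib_iff {y : A₂} :
    (Sum.inr y : A₁ ⊕ A₂) ∈ Dfib D₁ D₂ ↔ y ∈ D₂ := by
  simp [Dfib]

lemma Admissible.starMu_mem_iff (hadm : Admissible D₁ D₂ lam mu) (x : A₁ ⊕ A₂) :
    starMu mu x ∈ D₁ ↔ x ∈ Dfib D₁ D₂ := by
  rcases x with x | y
  · simp [starMu]
  · simpa [starMu] using hadm.2 y

lemma Admissible.starLa_mem_iff (hadm : Admissible D₁ D₂ lam mu) (x : A₁ ⊕ A₂) :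
    starLa lam x ∈ D₂ ↔ x ∈ Dfib D₁ D₂ := by
  rcases x with x | y
  · simpa [starLa] using hadm.1 x
  · simp [starLa]

variable {I₁ : (c : C₁) → (Fin (ar₁ c) → A₁) → A₁}
  {I₂ : (c : C₂) → (Fin (ar₂ c) → A₂) → A₂}

lemma Conjunctive.fibInterp (hadm : Admissible D₁ D₂ lam mu) (h₁ : Conjunctive I₁ D₁)
    (h₂ : Conjunctive I₂ D₂) : Conjunctive (fibInterp I₁ I₂ lam mu) (Dfib D₁ D₂) := by
  rintro (c | c) a
  · exact inl_mem_Dfib_iff.trans <| (h₁ c _).trans <|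
      forall_congr' fun i => hadm.starMu_mem_iff (a i)
  · exact inr_mem_Dfib_iff.trans <| (h₂ c _).trans <|
      forall_congr' fun i => hadm.starLa_mem_iff (a i)

end Fibred

section Associated

variable {C A : Type} {ar : C → ℕ} {I : (c : C) → (Fin (ar c) → A) → A} {D : Set A}
  {c₁ c₂ : C} {h : ar c₁ = ar c₂} {φ ψ : Fm C ar}

lemma Repl.eval_mem_iff (hI : Conjunctive I D) (hrepl : Repl c₁ c₂ h φ ψ) (v : ℕ → A) :
    eval I v φ ∈ D ↔ eval I v ψ ∈ D := by
  induction hrepl with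
  | top args =>
    rw [eval, eval, hI, hI]
    exact (finCongr h.symm).forall_congr_right.symm
  | congr c args args' j _ hother ih =>
    rw [eval, eval, hI, hI]
    refine forall_congr' fun i => ?_
    rcases eq_or_ne i j with rfl | hij
    · exact ih
    · rw [hother i hij]

lemma Assoc.eval_mem_iff (hI : Conjunctive I D) (hassoc : Assoc c₁ c₂ h φ ψ) (v : ℕ → A) :
    eval I v φ ∈ D ↔ eval I v ψ ∈ D :=
  (Equivalence.eqvGen_iff (r := fun φ ψ => eval I v φ ∈ D ↔ eval I v ψ ∈ D)
    ⟨fun _ => Iff.rfl, Iff.symm, Iff.trans⟩).1 <|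
    hassoc.mono fun _ _ hrepl => hrepl.eval_mem_iff hI v

end Associated

lemma admissible_lam2 : Admissible {Three.o} {Three.o} lam2 lam2 :=
  ⟨fun x => by cases x <;> simp [lam2], fun x => by cases x <;> simp [lam2]⟩

lemma conjunctive_IL : Conjunctive IL {Three.o} := by
  intro _ a
  simp only [IL, Fin.forall_fin_two, Set.mem_singleton_iff]
  cases a 0 <;> cases a 1 <;> decide

lemma conjunctive_IG : Conjunctive IG {Three.o} := by
  intro _ a
  simp only [IG, Fin.forall_fin_two, Set.mem_singleton_iff]
  cases a 0 <;> cases a 1 <;> decide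

/-- in the fibring of the conjunction fragments of `Ł₃` and `G₃`
via `(λ₂, μ₂)` (with `μ₂ = λ₂⁻¹ = λ₂`), the two conjunctions are identified
(all `(&_Ł,&_G)`-associated formulas are simultaneously designated), even
though `λ₂` is not a homomorphism between the conjunction fragments. -/
theorem luk_godel_identification :
    (¬ ∀ x y : Three, lam2 (andL x y) = andG (lam2 x) (lam2 y)) ∧
    (∀ φ₁ φ₂ : Fm (Unit ⊕ Unit) (Sum.elim (fun _ => 2) (fun _ => 2)),
      Assoc (Sum.inl ()) (Sum.inr ()) (by rfl) φ₁ φ₂ →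
      ∀ v : ℕ → Three ⊕ Three,
        (eval (fibInterp IL IG lam2 lam2) v φ₁ ∈
            Dfib ({Three.o} : Set Three) ({Three.o} : Set Three) ↔
          eval (fibInterp IL IG lam2 lam2) v φ₂ ∈
            Dfib ({Three.o} : Set Three) ({Three.o} : Set Three))) :=
  ⟨fun hhom => absurd (hhom .h .h) (by decide),
    fun _ _ hassoc =>
      hassoc.eval_mem_iff (conjunctive_IL.fibInterp admissible_lam2 conjunctive_IG)⟩

end Fibring
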